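/- Let r ≥ 2, μ ∈ P̄_k, and let v = (v_1,…,v_r) be any integer vector whose entries are pairwise distinct modulo r+k. Then S_{H^1(μ)}(ζ_v) = (−1)^{r−1} · exp(−2πi(μ_{r−1}+1)|v|/(r+k)) · S_μ(ζ_v). -/

import Mathlib

open scoped BigOperators
open Complex

noncomputable section

namespace VerlindePaper

/-- The Schur value `S_λ(z₁,…,z_r) = det(z_j^{λ_i+r-i}) / det(z_j^{r-i})`
(indices `i` are 0-based, so the exponent is `λ i + (r - 1 - i)`). -/
noncomputable def schur {r : ℕ} (lam : Fin r → ℤ) (z : Fin r → ℂ) : ℂ :=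
  Matrix.det (Matrix.of fun i j : Fin r => z j ^ (lam i + ((r : ℤ) - 1 - (i : ℕ)))) /
    Matrix.det (Matrix.of fun i j : Fin r => z j ^ ((r : ℤ) - 1 - (i : ℕ)))

/-- `ζ_v = (e^{2πi v_1/(r+k)}, …, e^{2πi v_r/(r+k)})`. -/
noncomputable def zeta (r k : ℕ) (v : Fin r → ℤ) : Fin r → ℂ :=
  fun j => Complex.exp (2 * (Real.pi : ℂ) * Complex.I * (v j : ℂ) / ((r : ℂ) + (k : ℂ)))

/-- `D(v) = ∏_{i<j} (2 sin(π(v_i - v_j)/(r+k)))²`. -/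
noncomputable def Dv (r k : ℕ) (v : Fin r → ℤ) : ℝ :=
  ∏ p ∈ Finset.univ.filter (fun p : Fin r × Fin r => p.1 < p.2),
    (2 * Real.sin (Real.pi * ((v p.1 : ℝ) - (v p.2 : ℝ)) / ((r : ℝ) + (k : ℝ)))) ^ 2

/-- `P̄_k = {μ : 0 ≤ μ_r ≤ ⋯ ≤ μ_1 ≤ k}` (0-based: `μ 0 = μ_1`). -/
def Pbar (r k : ℕ) : Finset (Fin r → ℤ) :=
  (Finset.Icc 0 (fun _ => (k : ℤ))).filter (fun μ => ∀ i j : Fin r, i ≤ j → μ j ≤ μ i)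

/-- `P_k = {μ : 0 ≤ μ_r ≤ ⋯ ≤ μ_1 ≤ k-1}`. -/
def Pk (r k : ℕ) : Finset (Fin r → ℤ) :=
  (Finset.Icc 0 (fun _ => (k : ℤ) - 1)).filter (fun μ => ∀ i j : Fin r, i ≤ j → μ j ≤ μ i)

/-- `W_k = {μ ∈ P̄_k : μ_r = 0}`. -/
def Wk (r k : ℕ) : Finset (Fin r → ℤ) :=
  (Pbar r k).filter (fun μ => ∀ i : Fin r, (i : ℕ) = r - 1 → μ i = 0)

/-- `μ* = (k - μ_r, k - μ_{r-1}, …, k - μ_1)`. -/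
def mustar (k : ℕ) {r : ℕ} (μ : Fin r → ℤ) : Fin r → ℤ :=
  fun i => (k : ℤ) - μ i.rev

/-- `μ ∼ ν` iff `μ - ν` is a constant vector. -/
def sim {r : ℕ} (μ ν : Fin r → ℤ) : Prop := ∃ a : ℤ, ∀ i, μ i = ν i + a

/-- The index set of the Verlinde sums: integer vectors with
`0 = v_r < v_{r-1} < ⋯ < v_1 < r + k`. -/
def Vset (r k : ℕ) : Finset (Fin r → ℤ) :=
  (Finset.Icc 0 (fun _ => (r : ℤ) + (k : ℤ) - 1)).filter
    (fun v => (∀ i j : Fin r, i < j → v j < v i) ∧ ∀ i : Fin r, (i : ℕ) = r - 1 → v i = 0)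

/-- The Verlinde number `V_g(r,d,(λ_x)_{x∈I})`. -/
noncomputable def verlinde (r k : ℕ) (g : ℕ) (d : ℤ) {I : Type*} [Fintype I]
    (lam : I → Fin r → ℤ) : ℂ :=
  (-1 : ℂ) ^ (d * ((r : ℤ) - 1)) * ((k : ℂ) / (r : ℂ)) ^ g *
    ((r : ℂ) * ((r : ℂ) + (k : ℂ)) ^ (r - 1)) ^ ((g : ℤ) - 1) *
    ∑ v ∈ Vset r k,
      Complex.exp (2 * (Real.pi : ℂ) * Complex.I *
          ((d : ℂ) / (r : ℂ) -
            (∑ x, ∑ i, (lam x i : ℂ)) / ((r : ℂ) * ((r : ℂ) + (k : ℂ)))) *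
          (∑ i, (v i : ℂ))) *
        (∏ x, schur (lam x) (zeta r k v)) * ((Dv r k v : ℂ)) ^ (1 - (g : ℤ))

/-- The Hecke transformation
`H¹(μ) = (k - μ_{r-1} + μ_r, μ_1 - μ_{r-1}, …, μ_{r-2} - μ_{r-1}, 0)`. -/
def H1 (k : ℕ) {r : ℕ} (μ : Fin r → ℤ) : Fin r → ℤ := fun j =>
  have hj : (j : ℕ) < r := j.isLt
  if (j : ℕ) = 0 then (k : ℤ) - μ ⟨r - 2, by omega⟩ + μ ⟨r - 1, by omega⟩
  else μ ⟨(j : ℕ) - 1, by omega⟩ - μ ⟨r - 2, by omega⟩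

/-- The iterated Hecke transformation `H^m = H¹ ∘ ⋯ ∘ H¹`. -/
def Hm (k : ℕ) {r : ℕ} (m : ℕ) (μ : Fin r → ℤ) : Fin r → ℤ := (H1 k)^[m] μ

/-- `μ ∈ Y(λ, ω_s)`: `μ` is a partition obtained from `λ` by adding `s` boxes,
no two in the same row. -/
def inY {r : ℕ} (lam : Fin r → ℤ) (s : ℕ) (μ : Fin r → ℤ) : Prop :=
  (∀ i j : Fin r, i ≤ j → μ j ≤ μ i) ∧ (∀ i, μ i - lam i = 0 ∨ μ i - lam i = 1) ∧
    (∑ i, μ i) = (∑ i, lam i) + (s : ℤ)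

/-- The Vandermonde product `Δ(z) = ∏_{i<j} (z_i - z_j)`. -/
noncomputable def vand {r : ℕ} (z : Fin r → ℂ) : ℂ :=
  ∏ p ∈ Finset.univ.filter (fun p : Fin r × Fin r => p.1 < p.2), (z p.1 - z p.2)

/-- `J_v(t) = Σ_{τ ∈ S_r} sgn(τ) exp(2πi (Σ_j v_{τ(j)} t_j)/(r+k))`. -/
noncomputable def Jv (r k : ℕ) (v : Fin r → ℤ) (t : Fin r → Fin (r + k)) : ℂ :=
  ∑ τ : Equiv.Perm (Fin r), ((Equiv.Perm.sign τ : ℤ) : ℂ) *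
    Complex.exp (2 * (Real.pi : ℂ) * Complex.I *
      (∑ j, (v (τ j) : ℂ) * ((t j : ℕ) : ℂ)) / ((r : ℂ) + (k : ℂ)))


/-!
Moving the first row of the numerator matrix `(ζ_j^{H¹(μ)_i + r-1-i})` of `S_{H¹(μ)}(ζ_v)` to
the bottom gives the numerator matrix of `S_μ(ζ_v)` with every entry of column `j` multiplied by
`ζ_j^{-(μ_{r-1}+1)}`, up to an exponent shift by `r + k` in the last row, which `ζ_j^{r+k} = 1`
makes invisible. The row rotation is an `r`-cycle, of sign `(-1)^{r-1}`, and the column factors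
multiply to `exp(-2πi(μ_{r-1}+1)|v|/(r+k))`.
-/

theorem det_eq_sign_mul_prod_mul_det_of_perm {R n : Type*} [CommRing R] [Fintype n] [DecidableEq n]
    (σ : Equiv.Perm n) (d : n → R) (A B : Matrix n n R) (h : ∀ i j, B (σ i) j = d j * A i j) :
    B.det = (Equiv.Perm.sign σ : ℤ) * (∏ j, d j) * A.det := by
  have hperm := Matrix.det_permute σ B
  rw [show B.submatrix σ id = Matrix.of fun i j => d j * A i j from Matrix.ext h,
    Matrix.det_mul_row] at hperm
  have hsq : ((Equiv.Perm.sign σ : ℤ) : R) * (Equiv.Perm.sign σ : ℤ) = 1 := by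
    rw [← Int.cast_mul, ← Units.val_mul, Int.units_mul_self, Units.val_one, Int.cast_one]
  linear_combination (-((Equiv.Perm.sign σ : ℤ) : R)) * hperm - B.det * hsq

theorem zeta_zpow (r k : ℕ) (v : Fin r → ℤ) (j : Fin r) (a : ℤ) :
    zeta r k v j ^ a =
      Complex.exp (a * (2 * (Real.pi : ℂ) * Complex.I * (v j : ℂ) / ((r : ℂ) + (k : ℂ)))) :=
  (Complex.exp_int_mul _ _).symm

theorem zeta_ne_zero (r k : ℕ) (v : Fin r → ℤ) (j : Fin r) : zeta r k v j ≠ 0 :=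
  Complex.exp_ne_zero _

theorem zeta_zpow_add_period {r k : ℕ} (h : r + k ≠ 0) (v : Fin r → ℤ) (j : Fin r) (a : ℤ) :
    zeta r k v j ^ (a + ((r : ℤ) + k)) = zeta r k v j ^ a := by
  have hN : (r : ℂ) + k ≠ 0 := by exact_mod_cast h
  rw [zpow_add₀ (zeta_ne_zero r k v j), zeta_zpow _ _ _ _ ((r : ℤ) + k)]
  have : (((r : ℤ) + k : ℤ) : ℂ) * (2 * Real.pi * Complex.I * v j / (r + k)) =
      v j * (2 * Real.pi * Complex.I) := by
    push_cast
    field_simp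
  rw [this, Complex.exp_int_mul_two_pi_mul_I, mul_one]

theorem prod_zeta_zpow (r k : ℕ) (v : Fin r → ℤ) (c : ℤ) :
    ∏ j, zeta r k v j ^ c =
      Complex.exp (c * (2 * (Real.pi : ℂ) * Complex.I * (∑ j, (v j : ℂ)) / ((r : ℂ) + (k : ℂ)))) := by
  simp only [zeta_zpow, ← Complex.exp_sum, Finset.mul_sum, Finset.sum_div]

theorem H1_finRotate_add (k : ℕ) {n : ℕ} (μ : Fin (n + 2) → ℤ) (i : Fin (n + 2)) :
    H1 k μ (finRotate _ i) + (((n + 2 : ℕ) : ℤ) - 1 - (finRotate _ i : ℕ)) =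
      μ i + (((n + 2 : ℕ) : ℤ) - 1 - (i : ℕ)) - (μ ⟨n, by omega⟩ + 1) +
        if i = Fin.last _ then ((n + 2 : ℕ) : ℤ) + k else 0 := by
  split_ifs with hi
  · subst hi
    rw [finRotate_last]
    simp only [H1, Fin.val_zero, if_true, Fin.last]
    push_cast
    ring
  · have hval : (finRotate _ i : ℕ) = i + 1 := coe_finRotate_of_ne_last hi
    simp only [H1, hval, Nat.add_one_ne_zero, if_false, Nat.add_sub_cancel, Fin.eta]
    push_cast
    ring

/-- `S_{H¹(μ)}(ζ_v) = (-1)^{r-1} e^{-2πi(μ_{r-1}+1)|v|/(r+k)} S_μ(ζ_v)`. -/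
theorem schur_H1 (r k : ℕ) (hr : 2 ≤ r)
    (μ : Fin r → ℤ) (v : Fin r → ℤ) :
    schur (H1 k μ) (zeta r k v) =
      (-1 : ℂ) ^ (r - 1) *
        Complex.exp (-(2 * (Real.pi : ℂ) * Complex.I *
            ((μ ⟨r - 2, by omega⟩ : ℂ) + 1) * (∑ i, (v i : ℂ)) / ((r : ℂ) + (k : ℂ)))) *
        schur μ (zeta r k v) := by
  obtain ⟨n, rfl⟩ : ∃ n, r = n + 2 := ⟨r - 2, by omega⟩
  have hnum := det_eq_sign_mul_prod_mul_det_of_perm (finRotate (n + 2))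
    (fun j => zeta (n + 2) k v j ^ (-(μ ⟨n, by omega⟩ + 1)))
    (Matrix.of fun i j => zeta (n + 2) k v j ^ (μ i + (((n + 2 : ℕ) : ℤ) - 1 - (i : ℕ))))
    (Matrix.of fun i j => zeta (n + 2) k v j ^ (H1 k μ i + (((n + 2 : ℕ) : ℤ) - 1 - (i : ℕ))))
    fun i j => by
      rw [Matrix.of_apply, Matrix.of_apply, H1_finRotate_add, ← zpow_add₀ (zeta_ne_zero _ _ _ j)]
      split_ifs
      · rw [zeta_zpow_add_period (by omega)]
        congr 1
        ring
      · congr 1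
        ring
  rw [sign_finRotate, prod_zeta_zpow] at hnum
  rw [schur, schur, hnum, mul_div_assoc]
  push_cast
  congr 3
  ring

end VerlindePaper
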